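/- Fix an arbitrary infinite reference strand R over {A,C,G,T} containing infinitely many occurrences of each character, and let S be a uniformly random string in {A,C,G,T}^n. Let cost_R(S) be the index of the last character of R used when greedily printing S along R. Then cost_R(S) stochastically dominates the sum of n i.i.d. random variables each uniform on {1,2,3,4}; in particular E[cost_R(S)] ≥ 2.5n. -/

import Mathlib

open Finset
open scoped Classical

/-!
Greedy printing is optimal, so `refCost R S` is the greedy end position. At any position `p` the
`k` characters have pairwise distinct next occurrences; the one whose next occurrence has rank `y`
among them (`y = 0, …, k - 1`) lies at least `y` positions ahead and so costs at least `y + 1`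
steps. Reading a string as the sequence of ranks of its characters, each rank taken at the position
reached so far, is a bijection of `Fin n → Fin k` under which the greedy cost is at least
`∑ (rank + 1)`. Pushing the uniform measure through this bijection gives the domination, and the
expectation bound follows from `E[∑ (yᵢ + 1)] = n (k + 1) / 2`.
-/

noncomputable def refCost (R : ℕ → Fin 4) (S : List (Fin 4)) : ℕ :=
  sInf {m | S.Sublist ((List.range m).map R)}

section Greedy

variable {α : Type*} (R : ℕ → α)

noncomputable def nextOcc (p : ℕ) (c : α) : ℕ := sInf {i | p ≤ i ∧ R i = c}

/-- One past the position of `R` matched to the last character of `S` when `S` is printed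
greedily along `R` starting at position `p`. -/
noncomputable def greedyEnd : ℕ → List α → ℕ
  | p, [] => p
  | p, c :: S => greedyEnd (nextOcc R p c + 1) S

variable {R}

lemma nextOcc_le {p i : ℕ} {c : α} (hpi : p ≤ i) (hi : R i = c) : nextOcc R p c ≤ i :=
  Nat.sInf_le ⟨hpi, hi⟩

variable (hR : ∀ c, {i | R i = c}.Infinite)
include hR

lemma nextOcc_spec (p : ℕ) (c : α) : p ≤ nextOcc R p c ∧ R (nextOcc R p c) = c :=
  have ⟨i, hi, hpi⟩ := (hR c).exists_gt p
  Nat.sInf_mem (s := {i | p ≤ i ∧ R i = c}) ⟨i, hpi.le, hi⟩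

lemma le_nextOcc (p : ℕ) (c : α) : p ≤ nextOcc R p c :=
  (nextOcc_spec hR p c).1

lemma apply_nextOcc (p : ℕ) (c : α) : R (nextOcc R p c) = c :=
  (nextOcc_spec hR p c).2

lemma nextOcc_injective (p : ℕ) : Function.Injective (nextOcc R p) := fun c c' h => by
  rw [← apply_nextOcc hR p c, h, apply_nextOcc hR p c']

lemma nextOcc_mono {p q : ℕ} (h : p ≤ q) (c : α) : nextOcc R p c ≤ nextOcc R q c :=
  nextOcc_le (h.trans (le_nextOcc hR q c)) (apply_nextOcc hR q c)

lemma greedyEnd_mono (S : List α) {p q : ℕ} (h : p ≤ q) : greedyEnd R p S ≤ greedyEnd R q S := by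
  induction S generalizing p q with
  | nil => exact h
  | cons c S ih => exact ih (Nat.succ_le_succ (nextOcc_mono hR h c))

lemma le_greedyEnd (S : List α) (p : ℕ) : p ≤ greedyEnd R p S := by
  induction S generalizing p with
  | nil => exact le_rfl
  | cons c S ih => exact (le_nextOcc hR p c).trans (Nat.le_succ _) |>.trans (ih _)

lemma greedyEnd_le_of_sublist {S : List α} {p k : ℕ}
    (h : S.Sublist ((List.range' p k).map R)) : greedyEnd R p S ≤ p + k := by
  induction k generalizing S p with
  | zero =>
    rw [List.range'_zero, List.map_nil, List.sublist_nil] at h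
    simp [h, greedyEnd]
  | succ k ih =>
    rw [List.range'_succ, List.map_cons] at h
    cases h with
    | cons _ h =>
      have := greedyEnd_mono hR S (p.le_add_right 1)
      have := ih h
      omega
    | @cons_cons S _ _ h =>
      have hp : nextOcc R p (R p) + 1 ≤ p + 1 := Nat.succ_le_succ (nextOcc_le le_rfl rfl)
      have := greedyEnd_mono hR S hp
      have := ih h
      simp only [greedyEnd]
      omega

lemma sublist_map_range'_greedyEnd (S : List α) (p : ℕ) :
    S.Sublist ((List.range' p (greedyEnd R p S - p)).map R) := by
  induction S generalizing p with
  | nil => exact List.nil_sublist _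
  | cons c S ih =>
    set q := nextOcc R p c
    have hpq : p ≤ q := le_nextOcc hR p c
    have hqm : q + 1 ≤ greedyEnd R (q + 1) S := le_greedyEnd hR S (q + 1)
    have hsplit : List.range' p (greedyEnd R (q + 1) S - p) =
        List.range' p (q - p) ++ q :: List.range' (q + 1) (greedyEnd R (q + 1) S - (q + 1)) := by
      have := List.range'_append (s := p) (m := q - p)
        (n := greedyEnd R (q + 1) S - (q + 1) + 1) (step := 1)
      rw [show p + 1 * (q - p) = q by omega, List.range'_succ] at this
      rw [this]
      congr 1
      omega
    show (c :: S).Sublist ((List.range' p (greedyEnd R (q + 1) S - p)).map R)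
    rw [hsplit, List.map_append, List.map_cons, apply_nextOcc hR p c]
    exact ((ih (q + 1)).cons_cons c).trans (List.sublist_append_right _ _)

end Greedy

lemma refCost_eq_greedyEnd {R : ℕ → Fin 4} (hR : ∀ c, {i | R i = c}.Infinite) (S : List (Fin 4)) :
    refCost R S = greedyEnd R 0 S := by
  have hgreedy : S.Sublist ((List.range (greedyEnd R 0 S)).map R) := by
    simpa [List.range_eq_range'] using sublist_map_range'_greedyEnd hR S 0
  have hcost : S.Sublist ((List.range' 0 (refCost R S)).map R) := by
    rw [← List.range_eq_range']
    exact Nat.sInf_mem (s := {m | S.Sublist ((List.range m).map R)}) ⟨_, hgreedy⟩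
  exact le_antisymm (Nat.sInf_le hgreedy) (by simpa using greedyEnd_le_of_sublist hR hcost)

lemma Fin.add_val_le_of_strictMono {k a : ℕ} {g : Fin k → ℕ} (hg : StrictMono g)
    (ha : ∀ y, a ≤ g y) (y : Fin k) : a + y ≤ g y := by
  obtain ⟨j, hj⟩ := y
  induction j with
  | zero => simpa using ha _
  | succ j ih =>
    have := hg (show (⟨j, by omega⟩ : Fin k) < ⟨j + 1, hj⟩ from Nat.lt_succ_self j)
    have := ih (by omega)
    simp only at this ⊢
    omega

section Ranks

variable {k : ℕ} (R : ℕ → Fin k)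

/-- `rankPerm R p y` is the character whose next occurrence in `R` from position `p` on is the
`y`-th earliest, counting from `0`. -/
noncomputable def rankPerm (p : ℕ) : Equiv.Perm (Fin k) := Tuple.sort (nextOcc R p)

noncomputable def decodeRanks : ℕ → List (Fin k) → List (Fin k)
  | _, [] => []
  | p, y :: ys => rankPerm R p y :: decodeRanks (nextOcc R p (rankPerm R p y) + 1) ys

lemma length_decodeRanks (ys : List (Fin k)) (p : ℕ) : (decodeRanks R p ys).length = ys.length := by
  induction ys generalizing p with
  | nil => rfl
  | cons y ys ih => simp [decodeRanks, ih]

lemma decodeRanks_injective (p : ℕ) : Function.Injective (decodeRanks R p) := by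
  intro ys ys' h
  induction ys generalizing ys' p with
  | nil => cases ys' <;> simp_all [decodeRanks]
  | cons y ys ih =>
    cases ys' with
    | nil => simp [decodeRanks] at h
    | cons y' ys' =>
      simp only [decodeRanks, List.cons.injEq] at h
      obtain rfl := (rankPerm R p).injective h.1
      rw [ih _ h.2]

variable {R} (hR : ∀ c, {i | R i = c}.Infinite)
include hR

lemma add_le_nextOcc_rankPerm (p : ℕ) (y : Fin k) : p + y ≤ nextOcc R p (rankPerm R p y) :=
  have hsorted : StrictMono (nextOcc R p ∘ rankPerm R p) :=
    (Tuple.monotone_sort _).strictMono_of_injective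
      ((nextOcc_injective hR p).comp (rankPerm R p).injective)
  Fin.add_val_le_of_strictMono hsorted (fun _ => le_nextOcc hR p _) y

lemma add_sum_le_greedyEnd_decodeRanks (ys : List (Fin k)) (p : ℕ) :
    p + (ys.map fun v : Fin k => (v : ℕ) + 1).sum ≤ greedyEnd R p (decodeRanks R p ys) := by
  induction ys generalizing p with
  | nil => simp [decodeRanks, greedyEnd]
  | cons y ys ih =>
    have := add_le_nextOcc_rankPerm hR p y
    have := ih (nextOcc R p (rankPerm R p y) + 1)
    simp only [decodeRanks, greedyEnd, List.map_cons, List.sum_cons]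
    omega

lemma exists_injective_sum_le_greedyEnd (n : ℕ) :
    ∃ Φ : (Fin n → Fin k) → (Fin n → Fin k), Function.Injective Φ ∧
      ∀ y, ∑ i, ((y i : ℕ) + 1) ≤ greedyEnd R 0 (List.ofFn (Φ y)) := by
  let Φ (y : Fin n → Fin k) : Fin n → Fin k := fun i =>
    (decodeRanks R 0 (List.ofFn y)).get (i.cast (by simp [length_decodeRanks]))
  have hΦ (y : Fin n → Fin k) : List.ofFn (Φ y) = decodeRanks R 0 (List.ofFn y) :=
    List.ext_get (by simp [length_decodeRanks]) (by simp [Φ])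
  refine ⟨Φ, fun y y' h => List.ofFn_injective (decodeRanks_injective R 0 ?_), fun y => ?_⟩
  · rw [← hΦ, ← hΦ, h]
  · rw [hΦ, ← List.sum_ofFn]
    simpa [List.map_ofFn, Function.comp_def] using add_sum_le_greedyEnd_decodeRanks hR (List.ofFn y) 0

end Ranks

lemma two_mul_sum_sum_val_add_one (n k : ℕ) :
    2 * ∑ y : Fin n → Fin k, ∑ i, ((y i : ℕ) + 1) = (k + 1) * n * k ^ n := by
  set F : (Fin n → Fin k) → ℕ := fun y => ∑ i, ((y i : ℕ) + 1)
  let e : (Fin n → Fin k) ≃ (Fin n → Fin k) := Equiv.piCongrRight fun _ => Fin.revPerm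
  have hpair (y : Fin n → Fin k) : F y + F (e y) = (k + 1) * n := by
    calc F y + F (e y) = ∑ _ : Fin n, (k + 1) := by
          rw [← sum_add_distrib]
          refine sum_congr rfl fun i _ => ?_
          have := (y i).isLt
          simp only [e, Equiv.piCongrRight_apply, Pi.map_apply, Fin.revPerm_apply, Fin.val_rev]
          omega
      _ = (k + 1) * n := by simp [mul_comm]
  calc 2 * ∑ y, F y = ∑ y, (F y + F (e y)) := by rw [two_mul, sum_add_distrib, e.sum_comp]
    _ = (k + 1) * n * k ^ n := by simp [hpair, mul_comm]

lemma card_filter_le_card_filter_of_injective {β : Type*} [Fintype β] {f g : β → ℕ} {Φ : β → β}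
    (hΦ : Function.Injective Φ) (h : ∀ y, f y ≤ g (Φ y)) (t : ℕ) :
    #{y | t ≤ f y} ≤ #{y | t ≤ g y} :=
  card_le_card_of_injOn Φ (fun y hy => by simp_all [(h y).trans']) hΦ.injOn

lemma sum_le_sum_of_injective {β M : Type*} [Fintype β] [AddCommMonoid M] [PartialOrder M]
    [IsOrderedAddMonoid M] {f g : β → M} {Φ : β → β} (hΦ : Function.Injective Φ)
    (h : ∀ y, f y ≤ g (Φ y)) : ∑ y, f y ≤ ∑ y, g y :=
  calc ∑ y, f y ≤ ∑ y, g (Φ y) := sum_le_sum fun y _ => h y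
    _ = ∑ y, g y := (Finite.injective_iff_bijective.mp hΦ).sum_comp g

/-- For any infinite reference strand R containing each character infinitely
often, the cost of a uniformly random strand in {A,C,G,T}^n stochastically
dominates a sum of n i.i.d. uniforms on {1,2,3,4} (expressed by counting over
the uniform sample space), and in particular E[cost] ≥ 2.5n. -/
theorem stmt10 (n : ℕ) (R : ℕ → Fin 4) (hR : ∀ c : Fin 4, {i : ℕ | R i = c}.Infinite) :
    (∀ t : ℕ,
      (Finset.univ.filter
        (fun y : Fin n → Fin 4 => t ≤ ∑ i, ((y i : ℕ) + 1))).card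
      ≤ (Finset.univ.filter
        (fun S : Fin n → Fin 4 => t ≤ refCost R (List.ofFn S))).card) ∧
    5 * n * 4 ^ n ≤ 2 * ∑ S : Fin n → Fin 4, refCost R (List.ofFn S) := by
  obtain ⟨Φ, hΦ, hgreedy⟩ := exists_injective_sum_le_greedyEnd hR n
  have hcost (y : Fin n → Fin 4) : ∑ i, ((y i : ℕ) + 1) ≤ refCost R (List.ofFn (Φ y)) := by
    rw [refCost_eq_greedyEnd hR]
    exact hgreedy y
  refine ⟨card_filter_le_card_filter_of_injective hΦ hcost, ?_⟩
  calc 5 * n * 4 ^ n = 2 * ∑ y : Fin n → Fin 4, ∑ i, ((y i : ℕ) + 1) :=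
        (two_mul_sum_sum_val_add_one n 4).symm
    _ ≤ 2 * ∑ S : Fin n → Fin 4, refCost R (List.ofFn S) :=
        Nat.mul_le_mul_left 2 (sum_le_sum_of_injective hΦ hcost)
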